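/- For r ≥ 2, the optimal success probability for minimum-error discrimination satisfies P^opt ≤ (1/r)·(1 + ∑_{1≤i<j≤r} ‖qᵢρᵢ − q_jρ_j‖₁). -/

import Mathlib

open scoped ComplexOrder

/-- The operator absolute value `√(AᴴA)` of a matrix. -/
noncomputable def matAbs {n : ℕ} (A : Matrix (Fin n) (Fin n) ℂ) : Matrix (Fin n) (Fin n) ℂ :=
  (Matrix.posSemidef_conjTranspose_mul_self A).1.eigenvectorUnitary.1 *
    Matrix.diagonal ((↑) ∘ Real.sqrt ∘ (Matrix.posSemidef_conjTranspose_mul_self A).1.eigenvalues) *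
    (star (Matrix.posSemidef_conjTranspose_mul_self A).1.eigenvectorUnitary : Matrix (Fin n) (Fin n) ℂ)

/-- The trace norm `‖A‖₁ = tr √(AᴴA)`. -/
noncomputable def traceNorm {n : ℕ} (A : Matrix (Fin n) (Fin n) ℂ) : ℝ :=
  ((matAbs A).trace).re

/-- The positive part `A⁺ = (|A| + A)/2` of a self-adjoint matrix `A`, so that
`A = A⁺ - A⁻` with `A⁺, A⁻ ≥ 0`. -/
noncomputable def matPosPart {n : ℕ} (A : Matrix (Fin n) (Fin n) ℂ) : Matrix (Fin n) (Fin n) ℂ :=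
  (2 : ℂ)⁻¹ • (matAbs A + A)

/-- A density operator: positive semidefinite with unit trace. -/
def IsDensity {n : ℕ} (ρ : Matrix (Fin n) (Fin n) ℂ) : Prop :=
  ρ.PosSemidef ∧ ρ.trace = 1

/-- A POVM with `r` outcomes: positive semidefinite effects summing to the identity. -/
def IsPOVM {n r : ℕ} (M : Fin r → Matrix (Fin n) (Fin n) ℂ) : Prop :=
  (∀ i, (M i).PosSemidef) ∧ ∑ i, M i = 1

/-- Success probability `∑ i, q i * tr (ρ i * M i)` of a measurement. -/
noncomputable def successProb {n r : ℕ} (q : Fin r → ℝ)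
    (ρ M : Fin r → Matrix (Fin n) (Fin n) ℂ) : ℝ :=
  ∑ i, q i * ((ρ i * M i).trace).re

/-- Optimal success probability under minimum-error discrimination. -/
noncomputable def optSuccess {n r : ℕ} (q : Fin r → ℝ)
    (ρ : Fin r → Matrix (Fin n) (Fin n) ℂ) : ℝ :=
  sSup {p | ∃ M, IsPOVM M ∧ p = successProb q ρ M}

/-!
For a POVM `M` put `g i j = qᵢ tr(ρᵢ Mⱼ)`, so that `∑ᵢⱼ g i j = 1` and the success probability
is `S = ∑ᵢ g i i`. For `i ≠ j` the effects satisfy `Mᵢ + Mⱼ ≤ 1`, hence `-1 ≤ Mᵢ - Mⱼ ≤ 1`, and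
splitting `Δ = qᵢρᵢ - qⱼρⱼ` into its positive and negative parts gives
`g i i + g j j - g i j - g j i = tr(Δ (Mᵢ - Mⱼ)) ≤ ‖Δ‖₁`.
Summed over `i < j`, the left-hand sides add up to `(r - 1) S - (1 - S) = r S - 1`.
-/

open scoped MatrixOrder

lemma Finset.two_nsmul_sum_filter_fst_lt_snd {ι M : Type*} [Fintype ι] [LinearOrder ι]
    [AddCommMonoid M] (F : ι → ι → M) (hsymm : ∀ i j, F i j = F j i) (hdiag : ∀ i, F i i = 0) :
    2 • ∑ p ∈ univ.filter (fun p : ι × ι => p.1 < p.2), F p.1 p.2 = ∑ i, ∑ j, F i j := by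
  have hsplit : ∀ i j, F i j = (if i < j then F i j else 0) + (if j < i then F j i else 0) := by
    intro i j
    rcases lt_trichotomy i j with h | rfl | h
    · simp [h, h.not_gt]
    · simp [hdiag]
    · simp [h, h.not_gt, hsymm i j]
  rw [Finset.sum_filter, Fintype.sum_prod_type, two_nsmul,
    Finset.sum_congr rfl fun i _ => Finset.sum_congr rfl fun j _ => hsplit i j]
  simp only [Finset.sum_add_distrib]
  rw [Finset.sum_comm (f := fun i j => if j < i then F j i else 0)]

namespace Matrix
variable {m 𝕜 : Type*} [Fintype m] [DecidableEq m] [RCLike 𝕜]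

lemma re_trace_mul_nonneg {P D : Matrix m m 𝕜} (hP : 0 ≤ P) (hD : 0 ≤ D) :
    0 ≤ RCLike.re (P * D).trace := by
  have hconj : 0 ≤ CFC.sqrt P * D * CFC.sqrt P :=
    conjugate_nonneg_of_nonneg hD (CFC.sqrt_nonneg P)
  rw [← CFC.sqrt_mul_sqrt_self P, Matrix.mul_assoc, trace_mul_comm, Matrix.mul_assoc,
    ← Matrix.mul_assoc]
  exact (RCLike.nonneg_iff.mp (nonneg_iff_posSemidef.mp hconj).trace_nonneg).1

lemma re_trace_mul_mono_right {P X Y : Matrix m m 𝕜} (hP : 0 ≤ P) (h : X ≤ Y) :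
    RCLike.re (P * X).trace ≤ RCLike.re (P * Y).trace := by
  have := re_trace_mul_nonneg hP (sub_nonneg.mpr h)
  rwa [Matrix.mul_sub, trace_sub, map_sub, sub_nonneg] at this

lemma re_trace_mul_le_re_trace_cfcAbs {A X : Matrix m m 𝕜} (hA : IsSelfAdjoint A)
    (hX : -1 ≤ X) (hX' : X ≤ 1) :
    RCLike.re (A * X).trace ≤ RCLike.re (CFC.abs A).trace := by
  have hpos := re_trace_mul_mono_right (CFC.posPart_nonneg A) hX'
  have hneg := re_trace_mul_mono_right (CFC.negPart_nonneg A) (neg_le.mp hX)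
  rw [Matrix.mul_one] at hpos
  rw [Matrix.mul_neg, Matrix.mul_one, trace_neg, map_neg] at hneg
  calc RCLike.re (A * X).trace = RCLike.re (A⁺ * X).trace - RCLike.re (A⁻ * X).trace := by
        nth_rw 1 [← CFC.posPart_sub_negPart A]
        rw [Matrix.sub_mul, trace_sub, map_sub]
    _ ≤ RCLike.re A⁺.trace + RCLike.re A⁻.trace := by linarith
    _ = RCLike.re (CFC.abs A).trace := by
        rw [← CFC.posPart_add_negPart A, trace_add, map_add]

end Matrix

lemma matAbs_eq_cfcAbs {n : ℕ} (A : Matrix (Fin n) (Fin n) ℂ) : matAbs A = CFC.abs A := by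
  rw [CFC.abs, CFC.sqrt_eq_real_sqrt _ (star_mul_self_nonneg A), cfcₙ_eq_cfc,
    Matrix.star_eq_conjTranspose, (Matrix.posSemidef_conjTranspose_mul_self A).1.cfc_eq,
    Matrix.IsHermitian.cfc, Unitary.conjStarAlgAut_apply]
  rfl

lemma traceNorm_eq_re_trace_cfcAbs {n : ℕ} (A : Matrix (Fin n) (Fin n) ℂ) :
    traceNorm A = RCLike.re (CFC.abs A).trace := by
  rw [traceNorm, matAbs_eq_cfcAbs]; rfl

lemma traceNorm_nonneg {n : ℕ} (A : Matrix (Fin n) (Fin n) ℂ) : 0 ≤ traceNorm A := by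
  rw [traceNorm_eq_re_trace_cfcAbs]
  exact (RCLike.nonneg_iff.mp (Matrix.nonneg_iff_posSemidef.mp (CFC.abs_nonneg A)).trace_nonneg).1

lemma re_trace_mul_sub_le_traceNorm {n : ℕ} {A B C : Matrix (Fin n) (Fin n) ℂ}
    (hA : A.IsHermitian) (hB : 0 ≤ B) (hC : 0 ≤ C) (hBC : B + C ≤ 1) :
    (A * (B - C)).trace.re ≤ traceNorm A := by
  rw [traceNorm_eq_re_trace_cfcAbs]
  refine Matrix.re_trace_mul_le_re_trace_cfcAbs hA ?_ ?_
  · calc -1 ≤ -(B + C) := neg_le_neg hBC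
      _ ≤ B - C := by rw [neg_add', sub_le_sub_iff_right]; exact neg_le_self hB
  · calc B - C ≤ B := sub_le_self B hC
      _ ≤ B + C := le_add_of_nonneg_right hC
      _ ≤ 1 := hBC

lemma IsPOVM.add_le_one {n r : ℕ} {M : Fin r → Matrix (Fin n) (Fin n) ℂ} (hM : IsPOVM M)
    {i j : Fin r} (hij : i ≠ j) : M i + M j ≤ 1 := by
  rw [← Finset.sum_pair hij, ← hM.2]
  exact Finset.sum_le_sum_of_subset_of_nonneg (Finset.subset_univ _)
    fun k _ _ => (hM.1 k).nonneg

lemma natCast_mul_successProb_sub_one_le {n r : ℕ} (ρ : Fin r → Matrix (Fin n) (Fin n) ℂ)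
    (q : Fin r → ℝ) (hρ : ∀ i, IsDensity (ρ i)) (hq1 : ∑ i, q i = 1)
    {M : Fin r → Matrix (Fin n) (Fin n) ℂ} (hM : IsPOVM M) :
    r * successProb q ρ M - 1 ≤
      ∑ p ∈ Finset.univ.filter (fun p : Fin r × Fin r => p.1 < p.2),
        traceNorm ((q p.1 : ℂ) • ρ p.1 - (q p.2 : ℂ) • ρ p.2) := by
  set g : Fin r → Fin r → ℝ := fun i j => q i * (ρ i * M j).trace.re
  have hrow : ∀ i, ∑ j, g i j = q i := fun i => by
    simp only [g, ← Finset.mul_sum, ← Complex.re_sum, ← Matrix.trace_sum,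
      hM.2, (hρ i).2, Complex.one_re, mul_one]
  have hpair : ∀ i j, i ≠ j →
      g i i + g j j - g i j - g j i ≤ traceNorm ((q i : ℂ) • ρ i - (q j : ℂ) • ρ j) := by
    intro i j hij
    have hΔ : ((q i : ℂ) • ρ i - (q j : ℂ) • ρ j).IsHermitian :=
      ((hρ i).1.1.smul (Complex.conj_ofReal _)).sub ((hρ j).1.1.smul (Complex.conj_ofReal _))
    convert re_trace_mul_sub_le_traceNorm hΔ (hM.1 i).nonneg (hM.1 j).nonneg (hM.add_le_one hij)
      using 1
    simp only [g, Matrix.sub_mul, Matrix.mul_sub, Matrix.smul_mul, Matrix.trace_sub,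
      Matrix.trace_smul, Complex.sub_re, smul_eq_mul, Complex.re_ofReal_mul]
    ring
  have htotal : 2 • ∑ p ∈ Finset.univ.filter (fun p : Fin r × Fin r => p.1 < p.2),
      (g p.1 p.1 + g p.2 p.2 - g p.1 p.2 - g p.2 p.1) = 2 * (r * successProb q ρ M - 1) := by
    rw [Finset.two_nsmul_sum_filter_fst_lt_snd (fun i j => g i i + g j j - g i j - g j i)
      (fun i j => by ring) (fun i => by ring)]
    simp only [Finset.sum_add_distrib, Finset.sum_sub_distrib, Finset.sum_const, Finset.card_univ,
      Fintype.card_fin, nsmul_eq_mul, hrow]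
    rw [Finset.sum_comm (f := fun i j => g j i)]
    simp only [hrow, hq1, successProb, g, Finset.mul_sum]
    ring
  calc r * successProb q ρ M - 1
      = ∑ p ∈ Finset.univ.filter (fun p : Fin r × Fin r => p.1 < p.2),
          (g p.1 p.1 + g p.2 p.2 - g p.1 p.2 - g p.2 p.1) := by
        rw [two_nsmul, ← two_mul] at htotal; linarith
    _ ≤ _ := Finset.sum_le_sum fun p hp => hpair _ _ (Finset.mem_filter.mp hp).2.ne

theorem stmt9_general {n r : ℕ} (ρ : Fin r → Matrix (Fin n) (Fin n) ℂ)
    (q : Fin r → ℝ) (hρ : ∀ i, IsDensity (ρ i))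
    (hq1 : ∑ i, q i = 1) :
    optSuccess q ρ ≤
      (1 / (r : ℝ)) * (1 +
        ∑ p ∈ Finset.univ.filter (fun p : Fin r × Fin r => p.1 < p.2),
            traceNorm ((q p.1 : ℂ) • ρ p.1 - (q p.2 : ℂ) • ρ p.2)) := by
  have hr : (0 : ℝ) < r := by
    rcases Nat.eq_zero_or_pos r with rfl | hr
    · simp at hq1
    · exact_mod_cast hr
  refine Real.sSup_le ?_ ?_
  · rintro _ ⟨M, hM, rfl⟩
    rw [one_div, inv_mul_eq_div, le_div_iff₀ hr]
    linarith [natCast_mul_successProb_sub_one_le ρ q hρ hq1 hM]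
  · exact mul_nonneg (by positivity)
      (add_nonneg zero_le_one (Finset.sum_nonneg fun _ _ => traceNorm_nonneg _))

theorem stmt9 {n r : ℕ} (hr : 2 ≤ r) (ρ : Fin r → Matrix (Fin n) (Fin n) ℂ)
    (q : Fin r → ℝ) (hρ : ∀ i, IsDensity (ρ i)) (hq : ∀ i, 0 < q i)
    (hq1 : ∑ i, q i = 1) :
    optSuccess q ρ ≤
      (1 / (r : ℝ)) * (1 +
        ∑ p ∈ Finset.univ.filter (fun p : Fin r × Fin r => p.1 < p.2),
            traceNorm ((q p.1 : ℂ) • ρ p.1 - (q p.2 : ℂ) • ρ p.2)) :=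
  stmt9_general ρ q hρ hq1
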